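/- arXiv:2304.02073 — 7 statements merged into one kernel-verified Lean document; each statement's English description precedes it below -/
import Mathlib

section
/- Let X be a metric space and T : X → X a continuous map such that for every nonempty open set U ⊆ X there exists j ∈ ℕ with T^j(U) = X. Then T is hypermixing: for every nonempty open U ⊆ X, X = ⋃_{i=0}^∞ ⋂_{n=i}^∞ T^n(U). -/
theorem stmt_1 {X : Type*} [MetricSpace X] (T : X → X) (hT : Continuous T)
    (h : ∀ U : Set X, IsOpen U → U.Nonempty → ∃ j : ℕ, 0 < j ∧ T^[j] '' U = Set.univ) :
    ∀ U : Set X, IsOpen U → U.Nonempty →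
      (⋃ i : ℕ, ⋂ n : ℕ, ⋂ _ : i ≤ n, T^[n] '' U) = Set.univ := by
  intro U hUo hUne
  obtain ⟨j, hj, hUj⟩ := h U hUo hUne
  -- T is surjective
  have hsurjj : Function.Surjective (T^[j]) := by
    intro x
    have : x ∈ T^[j] '' U := by rw [hUj]; trivial
    obtain ⟨y, _, hy⟩ := this
    exact ⟨y, hy⟩
  have hsurjT : Function.Surjective T := by
    obtain ⟨k, rfl⟩ := Nat.exists_eq_succ_of_ne_zero hj.ne'
    rw [Function.iterate_succ'] at hsurjj
    exact hsurjj.of_comp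
  have hsurjk : ∀ k : ℕ, Function.Surjective (T^[k]) :=
    fun k => hsurjT.iterate k
  apply Set.eq_univ_of_univ_subset
  intro x _
  refine Set.mem_iUnion.mpr ⟨j, ?_⟩
  simp only [Set.mem_iInter]
  intro n hn
  have : T^[n] '' U = Set.univ := by
    have hn' : n = (n - j) + j := (Nat.sub_add_cancel hn).symm
    rw [hn', Function.iterate_add, Set.image_comp, hUj,
      Set.image_univ, (hsurjk (n - j)).range_eq]
  rw [this]; trivial
end

section
/- Let X be a metric space and T : X → X a continuous injective map that is not the identity. Then there exists a nonempty open subset U of X such that T^n(U) ∩ T^{n+1}(U) = ∅ for every n ∈ ℕ₀. -/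
theorem stmt_6 {X : Type*} [MetricSpace X] (T : X → X) (hT : Continuous T)
    (hinj : Function.Injective T) (hid : T ≠ id) :
    ∃ U : Set X, IsOpen U ∧ U.Nonempty ∧ ∀ n : ℕ, T^[n] '' U ∩ T^[n+1] '' U = ∅ := by
  obtain ⟨x, hx⟩ : ∃ x, T x ≠ x := by
    by_contra h
    push_neg at h
    exact hid (funext h)
  have hd : 0 < dist (T x) x := dist_pos.mpr hx
  set ε := dist (T x) x / 3 with hε
  have hε0 : 0 < ε := by positivity
  obtain ⟨δ, hδ0, hδ⟩ := Metric.continuous_iff.mp hT x ε hε0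
  set r := min δ ε with hr
  have hr0 : 0 < r := lt_min hδ0 hε0
  refine ⟨Metric.ball x r, Metric.isOpen_ball, ⟨x, Metric.mem_ball_self hr0⟩, ?_⟩
  have key : Metric.ball x r ∩ T '' Metric.ball x r = ∅ := by
    ext z
    simp only [Set.mem_inter_iff, Set.mem_image, Metric.mem_ball, Set.mem_empty_iff_false,
      iff_false, not_and]
    rintro hz ⟨y, hy, rfl⟩
    have h1 : dist (T y) (T x) < ε := hδ y (lt_of_lt_of_le hy (min_le_left _ _))
    have h2 : dist (T y) x < ε := lt_of_lt_of_le hz (min_le_right _ _)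
    have := dist_triangle (T x) (T y) x
    rw [dist_comm (T x) (T y)] at this
    linarith [hd]
  intro n
  rw [Function.iterate_succ, Set.image_comp, ← Set.image_inter (hinj.iterate n), key,
    Set.image_empty]
end

section
/- Let X be a metric space and T : X → X a continuous injective map that is not the identity. Then T is not supermixing: there exists a nonempty open subset U of X such that ⋃_{i=0}^∞ ⋂_{n=i}^∞ T^n(U) is not dense in X (in fact each set ⋂_{n=i}^∞ T^n(U) is empty). -/
theorem stmt_7 {X : Type*} [MetricSpace X] (T : X → X) (hT : Continuous T)
    (hinj : Function.Injective T) (hid : T ≠ id) :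
    ∃ U : Set X, IsOpen U ∧ U.Nonempty ∧
      ¬ Dense (⋃ i : ℕ, ⋂ n : ℕ, ⋂ _ : i ≤ n, T^[n] '' U) ∧
      ∀ i : ℕ, (⋂ n : ℕ, ⋂ _ : i ≤ n, T^[n] '' U) = ∅ := by
  obtain ⟨x, hx⟩ : ∃ x, T x ≠ x := by
    by_contra h
    push_neg at h
    exact hid (funext h)
  set ε := dist (T x) x with hε
  have hεpos : 0 < ε := dist_pos.mpr hx
  obtain ⟨δ, hδpos, hδ⟩ := Metric.continuous_iff.mp hT x (ε/3) (by linarith)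
  set r := min δ (ε/3) with hr
  have hrpos : 0 < r := lt_min hδpos (by linarith)
  set U := Metric.ball x r with hU
  -- key: no v ∈ U with T v ∈ U
  have key : ∀ v ∈ U, T v ∉ U := by
    intro v hv hTv
    have h1 : dist (T v) (T x) < ε/3 := hδ v (lt_of_lt_of_le hv (min_le_left _ _))
    have h2 : dist (T v) x < ε/3 := lt_of_lt_of_le hTv (min_le_right _ _)
    have := dist_triangle (T x) (T v) x
    rw [dist_comm (T x) (T v)] at this
    have : ε < ε/3 + ε/3 := lt_of_le_of_lt this (by linarith)
    linarith
  have hempty : ∀ i : ℕ, (⋂ n : ℕ, ⋂ _ : i ≤ n, T^[n] '' U) = ∅ := by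
    intro i
    ext y
    simp only [Set.mem_iInter, Set.mem_empty_iff_false, iff_false]
    intro hy
    obtain ⟨u, hu, hui⟩ := hy i le_rfl
    obtain ⟨v, hv, hvi⟩ := hy (i+1) (Nat.le_succ i)
    rw [Function.iterate_succ_apply] at hvi
    have : T v = u := hinj.iterate i (by rw [hui, hvi])
    exact key v hv (this ▸ hu)
  refine ⟨U, Metric.isOpen_ball, ⟨x, Metric.mem_ball_self hrpos⟩, ?_, hempty⟩
  intro hd
  have : (⋃ i : ℕ, ⋂ n : ℕ, ⋂ _ : i ≤ n, T^[n] '' U) = (∅ : Set X) := by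
    simp [hempty]
  rw [this] at hd
  haveI : Nonempty X := ⟨x⟩
  have h2 := hd.closure_eq
  rw [closure_empty] at h2
  exact Set.empty_ne_univ h2
end

section
/- Let X be a metric space and T : X → X a surjective isometry with a point a whose orbit {a, Ta, T²a, …} is dense in X. Then T is strongly topologically transitive: for every nonempty open U ⊆ X, X = ⋃_{n=0}^∞ T^n(U). -/
theorem stmt_9 {X : Type*} [MetricSpace X] (T : X → X)
    (hsurj : Function.Surjective T) (hiso : ∀ x y : X, dist (T x) (T y) = dist x y)
    (a : X) (ha : Dense (Set.range fun n : ℕ => T^[n] a)) :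
    ∀ U : Set X, IsOpen U → U.Nonempty → (⋃ n : ℕ, T^[n] '' U) = Set.univ := by
  -- iterates are isometries
  have hiter : ∀ (n : ℕ) (x y : X), dist (T^[n] x) (T^[n] y) = dist x y := by
    intro n
    induction n with
    | zero => intro x y; simp
    | succ n ih =>
      intro x y
      rw [Function.iterate_succ_apply', Function.iterate_succ_apply', hiso, ih]
  -- iterates are surjective
  have hsurjn : ∀ n : ℕ, Function.Surjective (T^[n]) := fun n => hsurj.iterate n
  -- shifted orbits are dense
  have hdense : ∀ k : ℕ, Dense (Set.range fun n : ℕ => T^[n + k] a) := by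
    intro k
    induction k with
    | zero => simpa using ha
    | succ k ih =>
      rw [Metric.dense_iff] at ih ⊢
      intro x r hr
      obtain ⟨w, hw⟩ := hsurj x
      obtain ⟨z, hz1, n, hz2⟩ := ih w r hr
      refine ⟨T z, ?_, n, ?_⟩
      · rw [Metric.mem_ball, ← hw, hiso]
        rwa [Metric.mem_ball] at hz1
      · simp only [← hz2, ← Function.iterate_succ_apply' T (n + k) a]
        rfl
  intro U hU ⟨u, huU⟩
  ext x
  simp only [Set.mem_univ, iff_true, Set.mem_iUnion]
  obtain ⟨ε, hε, hball⟩ := Metric.isOpen_iff.mp hU u huU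
  -- find k with T^[k] a close to u
  obtain ⟨z, hz1, k, hz2⟩ := Metric.dense_iff.mp ha u (ε / 2) (by linarith)
  rw [Metric.mem_ball] at hz1
  rw [← hz2] at hz1
  -- find n with T^[n+k] a close to x
  obtain ⟨w, hw1, n, hw2⟩ := Metric.dense_iff.mp (hdense k) x (ε / 2) (by linarith)
  rw [Metric.mem_ball] at hw1
  rw [← hw2] at hw1
  -- T^[n] u is within ε of x
  have h1 : dist (T^[n] u) (T^[n + k] a) < ε / 2 := by
    rw [Function.iterate_add_apply, hiter]
    rwa [dist_comm] at hz1
  have h2 : dist (T^[n] u) x < ε := by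
    calc dist (T^[n] u) x ≤ dist (T^[n] u) (T^[n + k] a) + dist (T^[n + k] a) x :=
          dist_triangle _ _ _
      _ < ε / 2 + ε / 2 := by linarith
      _ = ε := by ring
  obtain ⟨y, hy⟩ := hsurjn n x
  refine ⟨n, y, hball ?_, hy⟩
  rw [Metric.mem_ball, ← hiter n, hy, dist_comm]
  exact h2
end

section
/- Let w = (w_n)_{n≥1} be a bounded positive weight sequence with inf w_n > 0, S the associated forward shift on ℓ^p, and suppose there exist n_k → ∞ and s_k → ∞ such that M_{i+1}^{n_k} ≥ 1/2 for i ≥ s_k and M_{i+1}^{n_k} ≥ 2^k for 0 ≤ i < s_k. Then ‖S^{n_k} x‖ → 0 as k → ∞ for every x ∈ ℓ^p. -/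
/-!
Split `x` into its head `H`, supported on the first `s_k` coordinates, and its tail `x - H`.
The shift `S^{n_k}` divides the `i`-th coordinate by `M_{i+1}^{n_k}`, so it contracts the head
by `2^{-k}` and expands the tail by at most `2`. Hence
`‖S^{n_k} x‖ ≤ 2^{-k} ‖H‖ + 2 ‖x - H‖`, and both terms vanish since `H → x` as `s_k → ∞`.
-/

open Filter Finset Topology

namespace lp

variable {p : ENNReal}

theorem sum_single_apply {α : Type*} {E : α → Type*} [∀ i, NormedAddCommGroup (E i)]
    [DecidableEq α] (s : Finset α) (f : ∀ i, E i) (j : α) :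
    (∑ i ∈ s, lp.single p i (f i)) j = if j ∈ s then f j else 0 := by
  simp only [coeFn_sum, Finset.sum_apply, lp.coeFn_single, Finset.sum_pi_single]

theorem norm_le_mul_norm_of_apply_add_le {E F : Type*} [NormedAddCommGroup E]
    [NormedAddCommGroup F] (hp : 0 < p.toReal) {f : lp (fun _ : ℕ => E) p}
    {g : lp (fun _ : ℕ => F) p} {C : ℝ} (hC : 0 ≤ C) {n : ℕ} (h0 : ∀ j < n, f j = 0)
    (h : ∀ i, ‖f (i + n)‖ ≤ C * ‖g i‖) : ‖f‖ ≤ C * ‖g‖ := by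
  refine norm_le_of_tsum_le hp (mul_nonneg hC (norm_nonneg' g)) ?_
  have hhead : ∑ j ∈ range n, ‖f j‖ ^ p.toReal = 0 :=
    sum_eq_zero fun j hj => by
      rw [h0 j (mem_range.1 hj), _root_.norm_zero, Real.zero_rpow hp.ne']
  rw [← ((lp.memℓp f).summable hp).sum_add_tsum_nat_add n, hhead, zero_add]
  calc ∑' i, ‖f (i + n)‖ ^ p.toReal
      ≤ ∑' i, C ^ p.toReal * ‖g i‖ ^ p.toReal := by
        refine (((lp.memℓp f).summable hp).comp_injective (add_left_injective n)).tsum_le_tsum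
          (fun i => ?_) (((lp.memℓp g).summable hp).mul_left _)
        rw [← Real.mul_rpow hC (norm_nonneg _)]
        exact Real.rpow_le_rpow (norm_nonneg _) (h i) hp.le
    _ = (C * ‖g‖) ^ p.toReal := by
        rw [tsum_mul_left, Real.mul_rpow hC (norm_nonneg' g), lp.norm_rpow_eq_tsum hp g]

end lp

namespace WeightedShift

variable {p : ENNReal} {w : ℕ → ℝ}

section Iterate

variable {S : lp (fun _ : ℕ => ℂ) p → lp (fun _ : ℕ => ℂ) p}

theorem iterate_apply_of_lt (hS0 : ∀ x, S x 0 = 0)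
    (hS : ∀ x n, S x (n + 1) = x n / (w (n + 1) : ℂ)) (x : lp (fun _ : ℕ => ℂ) p) :
    ∀ {n j : ℕ}, j < n → S^[n] x j = 0
  | n + 1, 0, _ => by rw [Function.iterate_succ_apply', hS0]
  | n + 1, j + 1, hj => by
    rw [Function.iterate_succ_apply', hS, iterate_apply_of_lt hS0 hS x (by omega), zero_div]

theorem iterate_apply_add (hS : ∀ x n, S x (n + 1) = x n / (w (n + 1) : ℂ))
    (x : lp (fun _ : ℕ => ℂ) p) (n i : ℕ) :
    S^[n] x (i + n) = x i / ∏ t ∈ range n, (w (i + 1 + t) : ℂ) := by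
  induction n with
  | zero => simp
  | succ n ih =>
    rw [Function.iterate_succ_apply', ← add_assoc, hS, ih, prod_range_succ, div_div,
      add_right_comm]

theorem norm_iterate_le (hp : 0 < p.toReal) (hS0 : ∀ x, S x 0 = 0)
    (hS : ∀ x n, S x (n + 1) = x n / (w (n + 1) : ℂ)) {x : lp (fun _ : ℕ => ℂ) p} {n : ℕ}
    {c : ℝ} (hc : 0 < c) (hx : ∀ i, x i ≠ 0 → c ≤ ∏ t ∈ range n, w (i + 1 + t)) :
    ‖S^[n] x‖ ≤ c⁻¹ * ‖x‖ := by
  refine lp.norm_le_mul_norm_of_apply_add_le hp (inv_nonneg.2 hc.le)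
    (fun _ => iterate_apply_of_lt hS0 hS x) fun i => ?_
  rw [iterate_apply_add hS, norm_div, ← Complex.ofReal_prod, Complex.norm_real, Real.norm_eq_abs]
  rcases eq_or_ne (x i) 0 with hxi | hxi
  · simp [hxi]
  · rw [inv_mul_eq_div]
    exact div_le_div_of_nonneg_left (norm_nonneg _) hc ((hx i hxi).trans (le_abs_self _))

end Iterate

variable [Fact (1 ≤ p)] {S : lp (fun _ : ℕ => ℂ) p →L[ℂ] lp (fun _ : ℕ => ℂ) p}

theorem norm_iterate_le_head_add_tail (hp : 0 < p.toReal) (hS0 : ∀ x, S x 0 = 0)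
    (hS : ∀ x n, S x (n + 1) = x n / (w (n + 1) : ℂ)) (x : lp (fun _ : ℕ => ℂ) p) {m n : ℕ}
    {a b : ℝ} (ha : 0 < a) (hb : 0 < b)
    (hhead : ∀ i < m, a ≤ ∏ t ∈ range n, w (i + 1 + t))
    (htail : ∀ i, m ≤ i → b ≤ ∏ t ∈ range n, w (i + 1 + t)) :
    ‖(⇑S)^[n] x‖ ≤ a⁻¹ * ‖∑ i ∈ range m, lp.single p i (x i)‖
      + b⁻¹ * ‖x - ∑ i ∈ range m, lp.single p i (x i)‖ := by
  set H := ∑ i ∈ range m, lp.single p i (x i)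
  have hH : ∀ i, H i ≠ 0 → a ≤ ∏ t ∈ range n, w (i + 1 + t) := fun i hi => by
    by_cases him : i < m
    · exact hhead i him
    · simp only [H, lp.sum_single_apply, mem_range, him, if_false, ne_eq,
        not_true_eq_false] at hi
  have hxH : ∀ i, (x - H) i ≠ 0 → b ≤ ∏ t ∈ range n, w (i + 1 + t) := fun i hi => by
    by_cases him : i < m
    · simp only [H, lp.coeFn_sub, Pi.sub_apply, lp.sum_single_apply, mem_range, him, if_true,
        sub_self, ne_eq, not_true_eq_false] at hi
    · exact htail i (not_lt.1 him)
  calc ‖(⇑S)^[n] x‖ = ‖(⇑S)^[n] H + (⇑S)^[n] (x - H)‖ := by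
        rw [← FunLike.coe_pow_eq_iterate, ← map_add, add_sub_cancel]
    _ ≤ ‖(⇑S)^[n] H‖ + ‖(⇑S)^[n] (x - H)‖ := norm_add_le _ _
    _ ≤ a⁻¹ * ‖H‖ + b⁻¹ * ‖x - H‖ :=
        add_le_add (norm_iterate_le hp hS0 hS ha hH) (norm_iterate_le hp hS0 hS hb hxH)

end WeightedShift

open WeightedShift in
theorem stmt_17_general (p : ENNReal) [Fact (1 ≤ p)] (hp : p ≠ ⊤)
    (w : ℕ → ℝ)
    (S : lp (fun _ : ℕ => ℂ) p →L[ℂ] lp (fun _ : ℕ => ℂ) p)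
    (hS0 : ∀ x : lp (fun _ : ℕ => ℂ) p, S x 0 = 0)
    (hS : ∀ (x : lp (fun _ : ℕ => ℂ) p) (n : ℕ), S x (n + 1) = x n / (w (n + 1) : ℂ))
    (nk sk : ℕ → ℕ)
    (hsk : Filter.Tendsto sk Filter.atTop Filter.atTop)
    (htail : ∀ k i, sk k ≤ i → (1:ℝ)/2 ≤ ∏ t ∈ Finset.range (nk k), w (i + 1 + t))
    (hfront : ∀ k i, i < sk k → (2:ℝ)^k ≤ ∏ t ∈ Finset.range (nk k), w (i + 1 + t)) :
    ∀ x : lp (fun _ : ℕ => ℂ) p,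
      Filter.Tendsto (fun k => ‖(⇑S)^[nk k] x‖) Filter.atTop (nhds 0) := by
  intro x
  have hp0 : 0 < p.toReal := ENNReal.toReal_pos (zero_lt_one.trans_le Fact.out).ne' hp
  set H : ℕ → lp (fun _ : ℕ => ℂ) p := fun k => ∑ i ∈ range (sk k), lp.single p i (x i)
  have hH : Tendsto H atTop (𝓝 x) := (lp.hasSum_single hp x).tendsto_sum_nat.comp hsk
  have hbound : ∀ k, ‖(⇑S)^[nk k] x‖ ≤ ((2:ℝ) ^ k)⁻¹ * ‖H k‖ + ((1:ℝ) / 2)⁻¹ * ‖x - H k‖ :=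
    fun k => norm_iterate_le_head_add_tail hp0 hS0 hS x (by positivity) (by norm_num)
      (hfront k) (htail k)
  have hpow : Tendsto (fun k : ℕ => ((2:ℝ) ^ k)⁻¹) atTop (𝓝 0) :=
    tendsto_inv_atTop_zero.comp (tendsto_pow_atTop_atTop_of_one_lt one_lt_two)
  have hlim := (hpow.mul hH.norm).add (((tendsto_const_nhds (x := x)).sub hH).norm.const_mul
    ((1:ℝ) / 2)⁻¹)
  rw [sub_self, norm_zero, mul_zero, zero_mul, add_zero] at hlim
  exact squeeze_zero (fun _ => norm_nonneg _) hbound hlim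

theorem stmt_17 (p : ENNReal) [Fact (1 ≤ p)] (hp : p ≠ ⊤)
    (w : ℕ → ℝ) (hpos : ∀ n, 1 ≤ n → 0 < w n)
    (hbdd : ∃ C : ℝ, ∀ n, 1 ≤ n → w n ≤ C)
    (hinf : ∃ c : ℝ, 0 < c ∧ ∀ n, 1 ≤ n → c ≤ w n)
    (S : lp (fun _ : ℕ => ℂ) p →L[ℂ] lp (fun _ : ℕ => ℂ) p)
    (hS0 : ∀ x : lp (fun _ : ℕ => ℂ) p, S x 0 = 0)
    (hS : ∀ (x : lp (fun _ : ℕ => ℂ) p) (n : ℕ), S x (n + 1) = x n / (w (n + 1) : ℂ))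
    (nk sk : ℕ → ℕ)
    (hnk : Filter.Tendsto nk Filter.atTop Filter.atTop)
    (hsk : Filter.Tendsto sk Filter.atTop Filter.atTop)
    (htail : ∀ k i, sk k ≤ i → (1:ℝ)/2 ≤ ∏ t ∈ Finset.range (nk k), w (i + 1 + t))
    (hfront : ∀ k i, i < sk k → (2:ℝ)^k ≤ ∏ t ∈ Finset.range (nk k), w (i + 1 + t)) :
    ∀ x : lp (fun _ : ℕ => ℂ) p,
      Filter.Tendsto (fun k => ‖(⇑S)^[nk k] x‖) Filter.atTop (nhds 0) :=
  stmt_17_general p hp w S hS0 hS nk sk hsk htail hfront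
end

section
/- On ℓ^p (1 ≤ p < ∞), there exists a weighted backward shift B_w that is strongly topologically transitive but not mixing. Specifically, with the block weight construction one has sup_n M_1^n = ∞ fails to become a limit (M_1^{s_{2k+1}} = 1 for all k, so B_w is not mixing), while B_w is surjective and for every nonzero x ∈ ℓ^p there is a sequence (n_k) with S^{n_k} x → 0, so B_w is strongly topologically transitive. -/
/-!
Write `G y = 2 ^ cost y` and `w n = G n / G (n - 1)`, so that `M_{j+1}^n = G (j + n) / G j`.
Here `cost y` is the least number of moves leading from `y` to a repunit `(3 ^ m - 1) / 2`, a move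
being a step `±1` or a jump forward by a power of `3`. Then `cost` is `1`-Lipschitz, so
`1/2 ≤ w ≤ 2`; it vanishes at the repunits, so `M_1^n = 1` infinitely often and `B_w` is not
mixing; and a jump costs one move, so `M_{j+1}^{3^k} ≥ 1/2`. Finally `cost (j + 3 ^ k) → ∞`:
a few jumps add a number of small ternary digit sum, while the repunit minus `3 ^ k` has many
digits `1`. Hence `S^{3^k}` is bounded by `2` while each coordinate of `S^{3^k} x` tends to `0`,
so `S^{3^k} x → 0` by dominated convergence, and strong transitivity follows as in Ansari's
criterion: `B^n` maps `(u_0, …, u_{n-1}, 0, …) + S^n x`, which is close to `u`, onto `x`.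
-/

open Finset Filter Topology
open scoped lp ENNReal

namespace Nat

variable {b : ℕ}

theorem digits_sum_eq_mod_add_div (hb : 1 < b) (n : ℕ) :
    (b.digits n).sum = n % b + (b.digits (n / b)).sum := by
  rcases n.eq_zero_or_pos with rfl | hn
  · simp
  · rw [digits_def' hb hn, List.sum_cons]

theorem digits_sum_mul_add (hb : 1 < b) (m : ℕ) {r : ℕ} (hr : r < b) :
    (b.digits (b * m + r)).sum = (b.digits m).sum + r := by
  rw [digits_sum_eq_mod_add_div hb, Nat.mul_add_mod, Nat.mod_eq_of_lt hr,
    Nat.mul_add_div (by omega), Nat.div_eq_of_lt hr, Nat.add_zero, Nat.add_comm]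

theorem digits_sum_succ_le (hb : 1 < b) (n : ℕ) :
    (b.digits (n + 1)).sum ≤ (b.digits n).sum + 1 := by
  induction n using Nat.strong_induction_on with
  | _ n ih =>
    obtain ⟨m, r, hr, rfl⟩ : ∃ m r, r < b ∧ n = b * m + r :=
      ⟨n / b, n % b, Nat.mod_lt _ (by omega), (Nat.div_add_mod n b).symm⟩
    rw [digits_sum_mul_add hb m hr]
    by_cases hrb : r + 1 < b
    · rw [Nat.add_assoc, digits_sum_mul_add hb m hrb]; omega
    · have hcarry : b * m + r + 1 = b * (m + 1) + 0 := by
        rw [Nat.mul_succ]; omega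
      rw [hcarry, digits_sum_mul_add hb _ (by omega)]
      have := ih m (by rcases m.eq_zero_or_pos with rfl | hm <;> nlinarith)
      omega

theorem digits_sum_add_le (hb : 1 < b) (a c : ℕ) :
    (b.digits (a + c)).sum ≤ (b.digits a).sum + c := by
  induction c with
  | zero => simp
  | succ c ih => rw [← Nat.add_assoc]; have := digits_sum_succ_le hb (a + c); omega

theorem digits_sum_add_pow_le (hb : 1 < b) (e a : ℕ) :
    (b.digits (a + b ^ e)).sum ≤ (b.digits a).sum + 1 := by
  induction e generalizing a with
  | zero => simpa using digits_sum_succ_le hb a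
  | succ e ih =>
    obtain ⟨m, r, hr, rfl⟩ : ∃ m r, r < b ∧ a = b * m + r :=
      ⟨a / b, a % b, Nat.mod_lt _ (by omega), (Nat.div_add_mod a b).symm⟩
    have : b * m + r + b ^ (e + 1) = b * (m + b ^ e) + r := by rw [pow_succ]; ring
    rw [this, digits_sum_mul_add hb _ hr, digits_sum_mul_add hb _ hr]
    have := ih m
    omega

theorem digits_sum_div_pow_le (hb : 1 < b) (t n : ℕ) :
    (b.digits (n / b ^ t)).sum ≤ (b.digits n).sum := by
  induction t with
  | zero => simp
  | succ t ih =>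
    rw [pow_succ, ← Nat.div_div_eq_div_mul]
    have := digits_sum_eq_mod_add_div hb (n / b ^ t)
    omega

end Nat

def weightProd (w : ℕ → ℝ) (i n : ℕ) : ℝ := ∏ t ∈ range n, w (i + t)

theorem weightProd_succ (w : ℕ → ℝ) (i n : ℕ) :
    weightProd w i (n + 1) = weightProd w i n * w (i + n) :=
  prod_range_succ _ _

theorem weightProd_pos {w : ℕ → ℝ} (hw : ∀ n, 0 < w (n + 1)) (j n : ℕ) :
    0 < weightProd w (j + 1) n :=
  prod_pos fun t _ => by simpa [Nat.add_right_comm] using hw (j + t)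

namespace lp

section Unweighted

variable {E : Type*} [NormedAddCommGroup E] {p : ℝ≥0∞} [Fact (1 ≤ p)]

theorem toReal_pos_of_ne_top (hp : p ≠ ⊤) : 0 < p.toReal :=
  ENNReal.toReal_pos (zero_lt_one.trans_le Fact.out).ne' hp

theorem norm_rpow_eq_sum_add_tsum_nat_add (hp : p ≠ ⊤) (x : ℓ^p(ℕ, E)) (n : ℕ) :
    ‖x‖ ^ p.toReal =
      ∑ i ∈ range n, ‖x i‖ ^ p.toReal + ∑' j, ‖x (j + n)‖ ^ p.toReal := by
  rw [norm_rpow_eq_tsum (toReal_pos_of_ne_top hp),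
    ((lp.memℓp x).summable (toReal_pos_of_ne_top hp)).sum_add_tsum_nat_add]

theorem memℓp_comp_succ_iff (hp : p ≠ ⊤) {f : ℕ → E} :
    Memℓp (fun n => f (n + 1)) p ↔ Memℓp f p := by
  simp only [memℓp_gen_iff (toReal_pos_of_ne_top hp)]
  exact summable_nat_add_iff (f := fun n => ‖f n‖ ^ p.toReal) 1

variable {𝕜 : Type*} [NormedField 𝕜] [NormedSpace 𝕜 E]

noncomputable def leftShift (hp : p ≠ ⊤) : ℓ^p(ℕ, E) →L[𝕜] ℓ^p(ℕ, E) :=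
  LinearMap.mkContinuous
    { toFun := fun x => ⟨fun n => x (n + 1), (memℓp_comp_succ_iff hp).2 (lp.memℓp x)⟩
      map_add' := fun _ _ => rfl
      map_smul' := fun _ _ => rfl }
    1 fun x => by
      rw [one_mul]
      refine norm_le_of_tsum_le (toReal_pos_of_ne_top hp) (norm_nonneg' x) ?_
      rw [norm_rpow_eq_sum_add_tsum_nat_add hp x 1]
      exact le_add_of_nonneg_left (sum_nonneg fun _ _ => by positivity)

noncomputable def rightShift (hp : p ≠ ⊤) : ℓ^p(ℕ, E) →L[𝕜] ℓ^p(ℕ, E) :=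
  LinearMap.mkContinuous
    { toFun := fun x =>
        ⟨fun | 0 => 0 | n + 1 => x n, (memℓp_comp_succ_iff hp).1 (lp.memℓp x)⟩
      map_add' := fun _ _ => by ext (_ | _); exacts [(add_zero 0).symm, rfl]
      map_smul' := fun _ _ => by ext (_ | _); exacts [(smul_zero _).symm, rfl] }
    1 fun x => by
      have hq := toReal_pos_of_ne_top hp
      rw [one_mul]
      refine norm_le_of_tsum_le hq (norm_nonneg' x) (le_of_eq ?_)
      rw [Summable.tsum_eq_zero_add ((lp.memℓp _).summable hq), norm_rpow_eq_tsum hq x]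
      simp [Real.zero_rpow hq.ne']

noncomputable def diagonal (a : ℕ → 𝕜) {C : ℝ} (ha : ∀ n, ‖a n‖ ≤ C) :
    ℓ^p(ℕ, E) →L[𝕜] ℓ^p(ℕ, E) :=
  LinearMap.mkContinuous
    { toFun := fun x => ⟨fun n => a n • x n, ((lp.memℓp x).norm.const_mul C).mono fun n =>
        (norm_smul_le _ _).trans (mul_le_mul_of_nonneg_right (ha n) (norm_nonneg _))⟩
      map_add' := fun _ _ => by ext; exact smul_add _ _ _
      map_smul' := fun _ _ => by ext; exact smul_comm _ _ _ }
    C fun x => by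
      have hC : 0 ≤ C := (norm_nonneg _).trans (ha 0)
      have hp0 : p ≠ 0 := (zero_lt_one.trans_le Fact.out).ne'
      calc _ ≤ ‖C • toNorm x‖ := norm_mono hp0 fun n => by
            simpa [abs_of_nonneg hC] using
              (norm_smul_le _ _).trans (mul_le_mul_of_nonneg_right (ha n) (norm_nonneg (x n)))
        _ = C * ‖x‖ := by rw [norm_const_smul hp0, norm_toNorm, Real.norm_of_nonneg hC]

end Unweighted

section Weighted

variable {𝕜 E : Type*} [RCLike 𝕜] [NormedAddCommGroup E] [NormedSpace 𝕜 E]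
  {p : ℝ≥0∞} [Fact (1 ≤ p)] (hp : p ≠ ⊤) (w : ℕ → ℝ)

noncomputable def backwardShift {C : ℝ} (hC : ∀ n, |w (n + 1)| ≤ C) :
    ℓ^p(ℕ, E) →L[𝕜] ℓ^p(ℕ, E) :=
  diagonal (fun n => (w (n + 1) : 𝕜)) (fun n => by simpa using hC n) ∘L leftShift hp

noncomputable def forwardShift {c : ℝ} (hc : 0 < c) (hw : ∀ n, c ≤ w (n + 1)) :
    ℓ^p(ℕ, E) →L[𝕜] ℓ^p(ℕ, E) :=
  rightShift hp ∘L diagonal (fun n => (w (n + 1) : 𝕜)⁻¹) fun n => by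
    rw [norm_inv, RCLike.norm_ofReal, abs_of_pos (hc.trans_le (hw n))]
    exact inv_anti₀ hc (hw n)

variable {C c : ℝ} (hC : ∀ n, |w (n + 1)| ≤ C) (hc : 0 < c) (hw : ∀ n, c ≤ w (n + 1))

@[simp] theorem backwardShift_apply (x : ℓ^p(ℕ, E)) (n : ℕ) :
    backwardShift (𝕜 := 𝕜) hp w hC x n = (w (n + 1) : 𝕜) • x (n + 1) :=
  rfl

@[simp] theorem forwardShift_apply_succ (x : ℓ^p(ℕ, E)) (n : ℕ) :
    forwardShift (𝕜 := 𝕜) hp w hc hw x (n + 1) = (w (n + 1) : 𝕜)⁻¹ • x n :=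
  rfl

theorem leftInverse_backwardShift_forwardShift :
    Function.LeftInverse (backwardShift (𝕜 := 𝕜) (E := E) hp w hC)
      (forwardShift (𝕜 := 𝕜) hp w hc hw) :=
  fun x => lp.ext <| funext fun n => by
    simp [smul_inv_smul₀ (RCLike.ofReal_ne_zero (K := 𝕜).2 (hc.trans_le (hw n)).ne')]

theorem backwardShift_iterate_apply (n : ℕ) (x : ℓ^p(ℕ, E)) (j : ℕ) :
    (backwardShift (𝕜 := 𝕜) hp w hC)^[n] x j =
      (weightProd w (j + 1) n : 𝕜) • x (j + n) := by
  induction n generalizing x with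
  | zero => simp [weightProd]
  | succ n ih =>
    rw [Function.iterate_succ_apply, ih, backwardShift_apply, smul_smul, weightProd_succ,
      Nat.add_right_comm j 1 n, ← Nat.add_assoc, RCLike.ofReal_mul]

theorem forwardShift_iterate_apply_of_lt {n i : ℕ} (h : i < n) (x : ℓ^p(ℕ, E)) :
    (forwardShift (𝕜 := 𝕜) hp w hc hw)^[n] x i = 0 := by
  induction n generalizing i with
  | zero => omega
  | succ n ih =>
    rw [Function.iterate_succ_apply']
    rcases i with _ | i
    · rfl
    · rw [forwardShift_apply_succ, ih (by omega), smul_zero]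

theorem forwardShift_iterate_apply_add (n : ℕ) (x : ℓ^p(ℕ, E)) (j : ℕ) :
    (forwardShift (𝕜 := 𝕜) hp w hc hw)^[n] x (j + n) =
      (weightProd w (j + 1) n : 𝕜)⁻¹ • x j := by
  induction n with
  | zero => simp [weightProd]
  | succ n ih =>
    rw [Function.iterate_succ_apply', ← Nat.add_assoc, forwardShift_apply_succ, ih,
      weightProd_succ, smul_smul]
    push_cast
    rw [mul_inv, mul_comm, Nat.add_right_comm]

theorem norm_forwardShift_iterate_rpow (n : ℕ) (x : ℓ^p(ℕ, E)) :
    ‖(forwardShift (𝕜 := 𝕜) hp w hc hw)^[n] x‖ ^ p.toReal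
      = ∑' j, ((weightProd w (j + 1) n)⁻¹ * ‖x j‖) ^ p.toReal := by
  have hq := toReal_pos_of_ne_top hp
  rw [norm_rpow_eq_sum_add_tsum_nat_add hp _ n, sum_eq_zero fun i hi => by
    simp [forwardShift_iterate_apply_of_lt hp w hc hw (mem_range.1 hi), Real.zero_rpow hq.ne'],
    zero_add]
  congr! 2 with j
  rw [forwardShift_iterate_apply_add, norm_smul, norm_inv, RCLike.norm_ofReal,
    abs_of_pos (weightProd_pos (fun n => hc.trans_le (hw n)) j n)]

theorem tendsto_forwardShift_iterate {N : ℕ → ℕ} {K : ℝ}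
    (hK : ∀ j k, (weightProd w (j + 1) (N k))⁻¹ ≤ K)
    (hM : ∀ j, Tendsto (fun k => weightProd w (j + 1) (N k)) atTop atTop) (x : ℓ^p(ℕ, E)) :
    Tendsto (fun k => (forwardShift (𝕜 := 𝕜) hp w hc hw)^[N k] x) atTop (𝓝 0) := by
  have hq := toReal_pos_of_ne_top hp
  have hM0 j k : 0 < weightProd w (j + 1) (N k) :=
    weightProd_pos (fun n => hc.trans_le (hw n)) j (N k)
  have hK0 : 0 ≤ K := (inv_pos.2 (hM0 0 0)).le.trans (hK 0 0)
  have hpow : Tendsto (fun k => ‖(forwardShift (𝕜 := 𝕜) hp w hc hw)^[N k] x‖ ^ p.toReal)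
      atTop (𝓝 0) := by
    simp_rw [norm_forwardShift_iterate_rpow]
    rw [← tsum_zero]
    refine tendsto_tsum_of_dominated_convergence (bound := fun j => (K * ‖x j‖) ^ p.toReal)
      ?_ (fun j => ?_) (Eventually.of_forall fun k j => ?_)
    · simp_rw [Real.mul_rpow hK0 (norm_nonneg _)]
      exact ((lp.memℓp x).summable hq).mul_left _
    · simpa [Real.zero_rpow hq.ne'] using
        (((hM j).inv_tendsto_atTop.mul_const ‖x j‖).rpow_const (Or.inr hq.le))
    · have h0 : 0 ≤ (weightProd w (j + 1) (N k))⁻¹ * ‖x j‖ :=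
        mul_nonneg (inv_pos.2 (hM0 j k)).le (norm_nonneg _)
      rw [Real.norm_of_nonneg (Real.rpow_nonneg h0 _)]
      exact Real.rpow_le_rpow h0 (mul_le_mul_of_nonneg_right (hK j k) (norm_nonneg _)) hq.le
  rw [tendsto_zero_iff_norm_tendsto_zero]
  simpa [Real.zero_rpow (inv_pos.2 hq).ne', Real.rpow_rpow_inv (norm_nonneg _) hq.ne'] using
    hpow.rpow_const (p := p.toReal⁻¹) (Or.inr (inv_pos.2 hq).le)

theorem backwardShift_iterate_sum_single (n : ℕ) (u : ℓ^p(ℕ, E)) :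
    (backwardShift (𝕜 := 𝕜) hp w hC)^[n] (∑ i ∈ range n, lp.single p i (u i)) = 0 :=
  lp.ext <| funext fun j => by
    rw [backwardShift_iterate_apply, lp.coeFn_sum, Finset.sum_apply,
      sum_eq_zero fun i hi => lp.single_apply_ne p i _ (by rw [mem_range] at hi; omega),
      smul_zero]
    rfl

theorem mem_iUnion_image_iterate_backwardShift {N : ℕ → ℕ} (hN : Tendsto N atTop atTop)
    {x : ℓ^p(ℕ, E)}
    (hx : Tendsto (fun k => (forwardShift (𝕜 := 𝕜) hp w hc hw)^[N k] x) atTop (𝓝 0))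
    {U : Set ℓ^p(ℕ, E)} (hU : IsOpen U) (hUne : U.Nonempty) :
    x ∈ ⋃ n, (backwardShift (𝕜 := 𝕜) hp w hC)^[n] '' U := by
  obtain ⟨u, hu⟩ := hUne
  have htrunc : Tendsto (fun k => ∑ i ∈ range (N k), lp.single p i (u i)) atTop (𝓝 u) :=
    (lp.hasSum_single hp u).tendsto_sum_nat.comp hN
  obtain ⟨k, hk⟩ := ((htrunc.add hx).eventually (hU.mem_nhds (by simpa using hu))).exists
  refine Set.mem_iUnion.2 ⟨N k, _, hk, ?_⟩
  rw [iterate_map_add, backwardShift_iterate_sum_single,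
    (leftInverse_backwardShift_forwardShift hp w hC hc hw).iterate, zero_add]

end Weighted

end lp

namespace TernaryCost

def repunit (m : ℕ) : ℕ := ∑ i ∈ range m, 3 ^ i

theorem repunit_succ (m : ℕ) : repunit (m + 1) = 3 * repunit m + 1 := by
  simp [repunit, sum_range_succ', pow_succ, mul_comm, mul_sum]

theorem two_mul_repunit_add_one (m : ℕ) : 2 * repunit m + 1 = 3 ^ m := by
  induction m with
  | zero => rfl
  | succ m ih => rw [repunit_succ, pow_succ]; omega

theorem repunit_add (a b : ℕ) : repunit (a + b) = repunit b + 3 ^ b * repunit a := by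
  simp [repunit, Nat.add_comm a b, sum_range_add, pow_add, mul_sum]

theorem repunit_mono : Monotone repunit := fun _ _ h =>
  sum_le_sum_of_subset (range_subset_range.2 h)

theorem le_repunit (m : ℕ) : m ≤ repunit m := by
  induction m with
  | zero => rfl
  | succ m ih => rw [repunit_succ]; omega

theorem pow_le_repunit {k m : ℕ} (h : k < m) : 3 ^ k ≤ repunit m :=
  single_le_sum (f := (3 ^ ·)) (fun _ _ => Nat.zero_le _) (mem_range.2 h)

theorem digits_sum_repunit (m : ℕ) : (Nat.digits 3 (repunit m)).sum = m := by
  induction m with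
  | zero => rfl
  | succ m ih => rw [repunit_succ, Nat.digits_sum_mul_add (by norm_num) _ (by norm_num), ih]

theorem repunit_sub_pow {L k m : ℕ} (hL : L ≤ k) (hk : k < m) :
    repunit m - 3 ^ k = 3 ^ L * (repunit (m - L) - 3 ^ (k - L)) + repunit L := by
  have hsplit : repunit m = repunit L + 3 ^ L * repunit (m - L) := by
    rw [← repunit_add, Nat.sub_add_cancel (by omega)]
  have hpow : 3 ^ k = 3 ^ L * 3 ^ (k - L) := by rw [← pow_add, Nat.add_sub_cancel' hL]
  have hle : 3 ^ (k - L) ≤ repunit (m - L) := pow_le_repunit (by omega)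
  rw [hsplit, hpow, Nat.mul_sub]
  have := Nat.mul_le_mul_left (3 ^ L) hle
  omega

theorem digits_sum_repunit_sub_pow {k m : ℕ} (hk : k < m) :
    (Nat.digits 3 (repunit m - 3 ^ k)).sum = m - 1 := by
  induction k generalizing m with
  | zero =>
    obtain ⟨m, rfl⟩ : ∃ m', m = m' + 1 := ⟨m - 1, by omega⟩
    rw [repunit_succ, pow_zero, Nat.add_sub_cancel, ← Nat.add_zero (3 * _),
      Nat.digits_sum_mul_add (by norm_num) _ (by norm_num), digits_sum_repunit]
    rfl
  | succ k ih =>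
    rw [repunit_sub_pow (L := 1) (by omega) hk, Nat.add_sub_cancel, pow_one,
      show repunit 1 = 1 from rfl, Nat.digits_sum_mul_add (by norm_num) _ (by norm_num),
      ih (by omega)]
    omega

/-- `V` is the total of the jumps: the fewest powers of `3` adding up to `V` is its ternary digit
sum, and `Nat.dist (y + V) (repunit m)` counts the steps `±1`. -/
noncomputable def cost (y : ℕ) : ℕ :=
  ⨅ mV : ℕ × ℕ, (Nat.digits 3 mV.2).sum + Nat.dist (y + mV.2) (repunit mV.1)

theorem cost_le (y m V : ℕ) :
    cost y ≤ (Nat.digits 3 V).sum + Nat.dist (y + V) (repunit m) :=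
  ciInf_le' _ (m, V)

theorem exists_cost_eq (y : ℕ) :
    ∃ m V, cost y = (Nat.digits 3 V).sum + Nat.dist (y + V) (repunit m) := by
  obtain ⟨⟨m, V⟩, h⟩ := ciInf_mem fun mV : ℕ × ℕ =>
    (Nat.digits 3 mV.2).sum + Nat.dist (y + mV.2) (repunit mV.1)
  exact ⟨m, V, h.symm⟩

theorem cost_repunit (m : ℕ) : cost (repunit m) = 0 := by
  simpa [Nat.dist_self] using cost_le (repunit m) m 0

theorem cost_zero : cost 0 = 0 := cost_repunit 0

theorem cost_le_cost_add_dist (y z : ℕ) : cost y ≤ cost z + Nat.dist y z := by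
  obtain ⟨m, V, h⟩ := exists_cost_eq z
  have := cost_le y m V
  have := Nat.dist.triangle_inequality (y + V) (z + V) (repunit m)
  rw [Nat.dist_add_add_right] at this
  omega

theorem cost_le_cost_add_pow (y k : ℕ) : cost y ≤ cost (y + 3 ^ k) + 1 := by
  obtain ⟨m, V, h⟩ := exists_cost_eq (y + 3 ^ k)
  have := cost_le y m (V + 3 ^ k)
  have := Nat.digits_sum_add_pow_le (by norm_num : 1 < 3) k V
  rw [Nat.add_comm V, ← Nat.add_assoc] at *
  omega

theorem le_digits_sum_add_dist {j L k : ℕ} (hk : 2 * L + j + 3 ≤ k) (m V : ℕ) :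
    L ≤ (Nat.digits 3 V).sum + Nat.dist (j + 3 ^ k + V) (repunit m) := by
  by_contra! h
  unfold Nat.dist at h
  rcases le_or_gt m k with hmk | hkm
  · have := repunit_mono hmk
    have := two_mul_repunit_add_one k
    have := le_repunit k
    omega
  have hA := pow_le_repunit hkm
  have hsA := digits_sum_repunit_sub_pow hkm
  set A := repunit m - 3 ^ k
  rcases le_or_gt V A with hVA | hAV
  · have := Nat.digits_sum_add_le (by norm_num : 1 < 3) V (A - V)
    rw [Nat.add_sub_cancel' hVA] at this
    omega
  -- `V` exceeds `A` by less than `L`, which cannot carry past the digits `1` of `A` at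
  -- positions `≥ L + 1`, so `V` keeps them.
  · have hX : A = 3 ^ (L + 1) * (repunit (m - (L + 1)) - 3 ^ (k - (L + 1))) + repunit (L + 1) :=
      repunit_sub_pow (by omega) hkm
    set X := repunit (m - (L + 1)) - 3 ^ (k - (L + 1))
    have hsX : (Nat.digits 3 X).sum = m - (L + 1) - 1 := digits_sum_repunit_sub_pow (by omega)
    have hVX : V / 3 ^ (L + 1) = X := by
      have := two_mul_repunit_add_one (L + 1)
      have := le_repunit (L + 1)
      rw [show V = 3 ^ (L + 1) * X + (repunit (L + 1) + (V - A)) by omega,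
        Nat.mul_add_div (by positivity), Nat.div_eq_of_lt (by omega), Nat.add_zero]
    have := Nat.digits_sum_div_pow_le (by norm_num : 1 < 3) (L + 1) V
    rw [hVX, hsX] at this
    omega

theorem tendsto_cost_add_pow (j : ℕ) : Tendsto (fun k => cost (j + 3 ^ k)) atTop atTop :=
  tendsto_atTop.2 fun L => eventually_atTop.2 ⟨2 * L + j + 3, fun _ hk =>
    le_ciInf fun mV => le_digits_sum_add_dist hk mV.1 mV.2⟩

noncomputable def height (y : ℕ) : ℝ := 2 ^ cost y

noncomputable def weight (n : ℕ) : ℝ := height n / height (n - 1)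

theorem height_pos (y : ℕ) : 0 < height y := by unfold height; positivity

theorem height_le_two_mul {a b : ℕ} (h : cost a ≤ cost b + 1) : height a ≤ 2 * height b := by
  rw [height, height, ← pow_succ']
  exact pow_le_pow_right₀ one_le_two h

theorem weight_pos (n : ℕ) : 0 < weight n := div_pos (height_pos _) (height_pos _)

theorem weight_le_two (n : ℕ) : weight n ≤ 2 := by
  rw [weight, div_le_iff₀ (height_pos _)]
  apply height_le_two_mul
  have := cost_le_cost_add_dist n (n - 1)
  have : Nat.dist n (n - 1) ≤ 1 := by unfold Nat.dist; omega
  omega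

theorem half_le_weight (n : ℕ) : 1 / 2 ≤ weight n := by
  rw [weight, le_div_iff₀ (height_pos _), one_div_mul_eq_div, div_le_iff₀ two_pos, mul_comm]
  apply height_le_two_mul
  have := cost_le_cost_add_dist (n - 1) n
  have : Nat.dist (n - 1) n ≤ 1 := by unfold Nat.dist; omega
  omega

theorem weightProd_weight (j n : ℕ) :
    weightProd weight (j + 1) n = height (j + n) / height j := by
  induction n with
  | zero => simp [weightProd, (height_pos j).ne']
  | succ n ih =>
    rw [weightProd, prod_range_succ, ← weightProd, ih, weight,
      show j + 1 + n - 1 = j + n by omega, show j + 1 + n = j + (n + 1) by omega,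
      mul_comm, div_mul_div_cancel₀ (height_pos _).ne']

theorem not_tendsto_weightProd_weight_one : ¬ Tendsto (weightProd weight 1) atTop atTop := by
  intro h
  have hrep : Tendsto repunit atTop atTop := tendsto_atTop_mono le_repunit tendsto_id
  refine not_tendsto_const_atTop (1 : ℝ) atTop ((h.comp hrep).congr fun m => ?_)
  simp [weightProd_weight 0, height, cost_repunit, cost_zero]

theorem inv_weightProd_weight_pow_le (j k : ℕ) :
    (weightProd weight (j + 1) (3 ^ k))⁻¹ ≤ 2 := by
  rw [weightProd_weight, inv_div, div_le_iff₀ (height_pos _)]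
  exact height_le_two_mul (cost_le_cost_add_pow j k)

theorem tendsto_weightProd_weight_pow (j : ℕ) :
    Tendsto (fun k => weightProd weight (j + 1) (3 ^ k)) atTop atTop := by
  simp only [weightProd_weight]
  refine Tendsto.atTop_div_const (height_pos j) ?_
  exact (tendsto_pow_atTop_atTop_of_one_lt one_lt_two).comp (tendsto_cost_add_pow j)

end TernaryCost

open TernaryCost

theorem stmt_18 (p : ENNReal) [Fact (1 ≤ p)] (hp : p ≠ ⊤) :
    ∃ (w : ℕ → ℝ) (B S : lp (fun _ : ℕ => ℂ) p →L[ℂ] lp (fun _ : ℕ => ℂ) p),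
      (∀ n, 1 ≤ n → 0 < w n) ∧ (∃ C : ℝ, ∀ n, 1 ≤ n → w n ≤ C) ∧
      (∃ c : ℝ, 0 < c ∧ ∀ n, 1 ≤ n → c ≤ w n) ∧
      (∀ (x : lp (fun _ : ℕ => ℂ) p) (n : ℕ), B x n = (w (n + 1) : ℂ) * x (n + 1)) ∧
      (∀ x : lp (fun _ : ℕ => ℂ) p, S x 0 = 0) ∧
      (∀ (x : lp (fun _ : ℕ => ℂ) p) (n : ℕ), S x (n + 1) = x n / (w (n + 1) : ℂ)) ∧
      ¬ Filter.Tendsto (fun n => ∏ t ∈ Finset.range n, w (1 + t))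
          Filter.atTop Filter.atTop ∧
      Function.Surjective B ∧
      (∀ x : lp (fun _ : ℕ => ℂ) p, x ≠ 0 → ∃ nk : ℕ → ℕ, StrictMono nk ∧
        Filter.Tendsto (fun k => (⇑S)^[nk k] x) Filter.atTop (nhds 0)) ∧
      (∀ U : Set (lp (fun _ : ℕ => ℂ) p), IsOpen U → U.Nonempty →
        {x : lp (fun _ : ℕ => ℂ) p | x ≠ 0} ⊆ ⋃ n : ℕ, (⇑B)^[n] '' U) := by
  have hupper n : |weight (n + 1)| ≤ 2 := (abs_of_pos (weight_pos _)).trans_le (weight_le_two _)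
  have hlower n : 1 / 2 ≤ weight (n + 1) := half_le_weight _
  set B := lp.backwardShift (𝕜 := ℂ) (E := ℂ) hp weight hupper
  set S := lp.forwardShift (𝕜 := ℂ) (E := ℂ) hp weight one_half_pos hlower
  have hpow : StrictMono (3 ^ · : ℕ → ℕ) := pow_right_strictMono₀ (by norm_num)
  have hS x : Tendsto (fun k => S^[3 ^ k] x) atTop (𝓝 0) :=
    lp.tendsto_forwardShift_iterate hp weight one_half_pos hlower inv_weightProd_weight_pow_le
      tendsto_weightProd_weight_pow x
  refine ⟨weight, B, S, fun n _ => weight_pos n, ⟨2, fun n _ => weight_le_two n⟩,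
    ⟨1 / 2, one_half_pos, fun n _ => half_le_weight n⟩, fun x n => rfl, fun x => rfl,
    fun x n => inv_mul_eq_div _ _, not_tendsto_weightProd_weight_one,
    (lp.leftInverse_backwardShift_forwardShift hp weight hupper one_half_pos hlower).surjective,
    fun x _ => ⟨_, hpow, hS x⟩, fun U hU hUne x _ =>
      lp.mem_iUnion_image_iterate_backwardShift hp weight hupper one_half_pos hlower
        hpow.tendsto_atTop (hS x) hU hUne⟩
end

section
/- Let X be a complete metric space without isolated points and T : X → X a surjective, topologically transitive isometry. Then T is strongly topologically transitive but not weakly mixing. -/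
theorem stmt_19 {X : Type*} [MetricSpace X] [CompleteSpace X] [Nonempty X]
    (hperf : ∀ x : X, Filter.NeBot (nhdsWithin x {x}ᶜ))
    (T : X → X) (hsurj : Function.Surjective T)
    (hiso : ∀ x y : X, dist (T x) (T y) = dist x y)
    (htrans : ∀ U V : Set X, IsOpen U → U.Nonempty → IsOpen V → V.Nonempty →
      ∃ n : ℕ, (T^[n] '' U ∩ V).Nonempty) :
    (∀ U : Set X, IsOpen U → U.Nonempty → (⋃ n : ℕ, T^[n] '' U) = Set.univ) ∧
    ¬ (∀ U V : Set X, IsOpen U → U.Nonempty → IsOpen V → V.Nonempty →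
        ∀ L : ℕ, ∃ n : ℕ, ∀ k < L, (T^[n+k] '' U ∩ V).Nonempty) := by
  -- iterates are isometries
  have hisoI : ∀ (n : ℕ) (a b : X), dist (T^[n] a) (T^[n] b) = dist a b := by
    intro n
    induction n with
    | zero => intro a b; simp
    | succ n ih =>
        intro a b
        rw [Function.iterate_succ_apply', Function.iterate_succ_apply', hiso, ih]
  -- every orbit is dense
  have hdense : ∀ (u y : X) (ε : ℝ), 0 < ε → ∃ m : ℕ, dist (T^[m] u) y < ε := by
    intro u y ε hε
    obtain ⟨m, z, ⟨w, hw, rfl⟩, hz⟩ := htrans (Metric.ball u (ε/2)) (Metric.ball y (ε/2))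
      Metric.isOpen_ball ⟨u, Metric.mem_ball_self (by linarith)⟩
      Metric.isOpen_ball ⟨y, Metric.mem_ball_self (by linarith)⟩
    refine ⟨m, ?_⟩
    have h1 : dist (T^[m] u) (T^[m] w) = dist u w := hisoI m u w
    have h2 : dist w u < ε/2 := Metric.mem_ball.mp hw
    have h3 : dist (T^[m] w) y < ε/2 := Metric.mem_ball.mp hz
    have h4 : dist u w = dist w u := dist_comm u w
    calc dist (T^[m] u) y ≤ dist (T^[m] u) (T^[m] w) + dist (T^[m] w) y := dist_triangle _ _ _
      _ < ε := by rw [h1, h4]; linarith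
  constructor
  · -- strong topological transitivity
    intro U hU hUne
    ext x
    simp only [Set.mem_iUnion, Set.mem_univ, iff_true]
    obtain ⟨u0, hu0⟩ := hUne
    obtain ⟨ε, hε, hball⟩ := Metric.isOpen_iff.mp hU u0 hu0
    obtain ⟨m, hm⟩ := hdense u0 x ε hε
    obtain ⟨w, hw⟩ := (hsurj.iterate m) x
    refine ⟨m, w, hball ?_, hw⟩
    rw [Metric.mem_ball]
    have : dist w u0 = dist (T^[m] w) (T^[m] u0) := (hisoI m w u0).symm
    rw [this, hw, dist_comm]
    exact hm
  · -- not weakly mixing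
    intro hwm
    -- weak mixing would force T = id
    have hfix : ∀ y : X, T y = y := by
      intro y
      have hd : ∀ δ : ℝ, 0 < δ → dist (T y) y ≤ 4 * δ := by
        intro δ hδ
        obtain ⟨p⟩ := (inferInstance : Nonempty X)
        obtain ⟨n, hn⟩ := hwm (Metric.ball p δ) (Metric.ball p δ)
          Metric.isOpen_ball ⟨p, Metric.mem_ball_self hδ⟩
          Metric.isOpen_ball ⟨p, Metric.mem_ball_self hδ⟩ 2
        have key : ∀ k : ℕ, k < 2 → dist (T^[n+k] y) y ≤ 2 * δ := by
          intro k hk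
          obtain ⟨z, ⟨u, hu, rfl⟩, hz⟩ := hn k hk
          have hu' : dist u p < δ := Metric.mem_ball.mp hu
          have hz' : dist (T^[n+k] u) p < δ := Metric.mem_ball.mp hz
          have hun : dist (T^[n+k] u) u < 2 * δ := by
            calc dist (T^[n+k] u) u ≤ dist (T^[n+k] u) p + dist p u := dist_triangle _ _ _
              _ < 2 * δ := by rw [dist_comm p u]; linarith
          refine le_of_forall_pos_le_add ?_
          intro ε hε
          obtain ⟨m, hm⟩ := hdense u y (ε/2) (by linarith)
          have hcomm : T^[n+k] (T^[m] u) = T^[m] (T^[n+k] u) := by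
            rw [← Function.iterate_add_apply, ← Function.iterate_add_apply, add_comm]
          calc dist (T^[n+k] y) y
              ≤ dist (T^[n+k] y) (T^[n+k] (T^[m] u)) + dist (T^[n+k] (T^[m] u)) (T^[m] u)
                  + dist (T^[m] u) y := dist_triangle4 _ _ _ _
            _ = dist y (T^[m] u) + dist (T^[n+k] u) u + dist (T^[m] u) y := by
                rw [hisoI, hcomm, hisoI]
            _ ≤ ε/2 + 2 * δ + ε/2 := by
                rw [dist_comm y (T^[m] u)]
                have := le_of_lt hun
                linarith
            _ = 2 * δ + ε := by ring
        have h0 : dist (T^[n] y) y ≤ 2 * δ := by simpa using key 0 (by norm_num)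
        have h1 : dist (T^[n+1] y) y ≤ 2 * δ := key 1 (by norm_num)
        have hTy : dist (T y) y = dist (T^[n+1] y) (T^[n] y) := by
          rw [Function.iterate_succ_apply]
          exact (hisoI n (T y) y).symm
        calc dist (T y) y = dist (T^[n+1] y) (T^[n] y) := hTy
          _ ≤ dist (T^[n+1] y) y + dist y (T^[n] y) := dist_triangle _ _ _
          _ ≤ 4 * δ := by rw [dist_comm y (T^[n] y)]; linarith
      have : dist (T y) y ≤ 0 := by
        refine le_of_forall_pos_le_add ?_
        intro ε hε
        have := hd (ε/4) (by linarith)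
        linarith
      have : dist (T y) y = 0 := le_antisymm this dist_nonneg
      exact dist_eq_zero.mp this
    -- but then transitivity fails: take two disjoint balls
    obtain ⟨p⟩ := (inferInstance : Nonempty X)
    have hne : ({p}ᶜ : Set X) ∈ nhdsWithin p {p}ᶜ := self_mem_nhdsWithin
    obtain ⟨q, hq⟩ := Filter.nonempty_of_mem (f := nhdsWithin p {p}ᶜ) hne
    have hqp : q ≠ p := hq
    have hD : 0 < dist p q := dist_pos.mpr (Ne.symm hqp)
    set r := dist p q / 2 with hr
    obtain ⟨n, z, ⟨u, hu, rfl⟩, hz⟩ := htrans (Metric.ball p r) (Metric.ball q r)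
      Metric.isOpen_ball ⟨p, Metric.mem_ball_self (by positivity)⟩
      Metric.isOpen_ball ⟨q, Metric.mem_ball_self (by positivity)⟩
    have hfixn : T^[n] u = u := Function.iterate_fixed (hfix u) n
    have hu' : dist u p < r := Metric.mem_ball.mp hu
    have hz' : dist u q < r := by rw [← hfixn]; exact Metric.mem_ball.mp hz
    have : dist p q ≤ dist p u + dist u q := dist_triangle _ _ _
    rw [dist_comm p u] at this
    have : dist p q < dist p q := by
      calc dist p q ≤ dist u p + dist u q := this
        _ < r + r := by linarith
        _ = dist p q := by rw [hr]; ring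
    exact lt_irrefl _ this
end
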